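/- Let α > 1, θ > 0, 0 < S < T ≤ ∞, set P^{1/(1+α)} = θ√(S^{−α+1} − T^{−α+1}), S' = P^{−1/(1+α)} S, T' = P^{−1/(1+α)} T, and Φ_{S',P}^{T'}(ζ) = ∫_{S'}^{T'} dx/|ζ − P(x^α,0,0)|. If θ S^α √(S^{−α+1} − T^{−α+1}) ≥ 2R for some R ≥ 1, then for every ζ with |ζ| ≤ R, Φ_{S',P}^{T'}(ζ) ≤ 2/(θ²(α−1)) and ∫_{S'}^{T'} dx/(1 + P x^α) ≥ 1/(2θ²(α−1)). -/

import Mathlib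

/-!
On the integration range `x > P^{-1/(1+α)} S` one has `P x^α ≥ P^{1/(1+α)} S^α ≥ 2R ≥ 2|ζ|`, so both
integrands are comparable to `x^{-α}/P`: the first is at most `2 x^{-α}/P` because
`|ζ - P(x^α,0,0)| ≥ P x^α / 2`, the second at least `x^{-α}/(2P)` because `P x^α ≥ 1`. The integral of
`x^{-α}` over the range is `P^{(α-1)/(1+α)} (S^{1-α} - T^{1-α})/(α-1)`, which by the choice of `P`
equals `P/(θ²(α-1))`.
-/

open MeasureTheory Set

noncomputable section

abbrev E3 := WithLp 2 (ℝ × ℂ)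

def axPt (α x : ℝ) : E3 := (WithLp.equiv 2 (ℝ × ℂ)).symm (x ^ α, 0)

/-- `T^e` for an extended real `T`, with the convention `⊤^e = 0` (as for `e < 0`). -/
def epow (T : EReal) (e : ℝ) : ℝ := if T = ⊤ then 0 else T.toReal ^ e

lemma norm_axPt (α : ℝ) {x : ℝ} (hx : 0 ≤ x) : ‖axPt α x‖ = x ^ α := by
  rw [WithLp.prod_norm_eq_of_L2]
  simp [axPt, Real.sqrt_sq (Real.rpow_nonneg hx α)]

lemma one_div_norm_sub_le {E : Type*} [SeminormedAddCommGroup E] {u v : E} (hv : 0 < ‖v‖)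
    (huv : 2 * ‖u‖ ≤ ‖v‖) : 1 / ‖u - v‖ ≤ 2 / ‖v‖ := by
  have hdist : ‖v‖ / 2 ≤ ‖u - v‖ := by
    have := norm_sub_norm_le v u
    rw [norm_sub_rev] at this
    linarith
  calc 1 / ‖u - v‖ ≤ 1 / (‖v‖ / 2) := one_div_le_one_div_of_le (by positivity) hdist
    _ = 2 / ‖v‖ := by field_simp

lemma one_div_norm_sub_smul_axPt_le {α P x : ℝ} {ζ : E3} (hP : 0 < P) (hx : 0 < x)
    (hζ : 2 * ‖ζ‖ ≤ P * x ^ α) :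
    1 / ‖ζ - P • axPt α x‖ ≤ 2 / P * x ^ (-α) := by
  have hnorm : ‖P • axPt α x‖ = P * x ^ α := by
    rw [norm_smul, norm_axPt α hx.le, Real.norm_of_nonneg hP.le]
  calc 1 / ‖ζ - P • axPt α x‖ ≤ 2 / (P * x ^ α) :=
        hnorm ▸ one_div_norm_sub_le (by rw [hnorm]; positivity) (by rwa [hnorm])
    _ = 2 / P * x ^ (-α) := by rw [Real.rpow_neg hx.le]; field_simp

lemma one_div_two_mul_rpow_neg_le {α P x : ℝ} (hx : 0 < x) (hPx : 1 ≤ P * x ^ α) :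
    1 / (2 * P) * x ^ (-α) ≤ 1 / (1 + P * x ^ α) := by
  calc 1 / (2 * P) * x ^ (-α) = 1 / (2 * (P * x ^ α)) := by
        rw [Real.rpow_neg hx.le]; field_simp
    _ ≤ 1 / (1 + P * x ^ α) := one_div_le_one_div_of_le (by linarith) (by linarith)

lemma lintegral_Ioi_ofReal_rpow_neg {α a : ℝ} (hα : 1 < α) (ha : 0 < a) :
    ∫⁻ x in Ioi a, ENNReal.ofReal (x ^ (-α)) = ENNReal.ofReal (a ^ (1 - α) / (α - 1)) := by
  rw [← ofReal_integral_eq_lintegral_ofReal (integrableOn_Ioi_rpow_of_lt (by linarith) ha)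
    (by filter_upwards [ae_restrict_mem measurableSet_Ioi] with x hx using
      Real.rpow_nonneg (ha.trans hx).le _),
    integral_Ioi_rpow_of_lt (by linarith) ha]
  congr 1
  rw [show -α + 1 = 1 - α by ring, div_eq_div_iff (by linarith) (by linarith)]
  ring

lemma lintegral_Ioo_ofReal_rpow_neg {α a b : ℝ} (hα : 1 < α) (ha : 0 < a) (hab : a ≤ b) :
    ∫⁻ x in Ioo a b, ENNReal.ofReal (x ^ (-α)) =
      ENNReal.ofReal ((a ^ (1 - α) - b ^ (1 - α)) / (α - 1)) := by
  rw [← ofReal_integral_eq_lintegral_ofReal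
    ((integrableOn_Ioi_rpow_of_lt (show -α < -1 by linarith) ha).mono_set Ioo_subset_Ioi_self)
    (by filter_upwards [ae_restrict_mem measurableSet_Ioo] with x hx using
      Real.rpow_nonneg (ha.trans hx.1).le _),
    ← integral_Ioc_eq_integral_Ioo, ← intervalIntegral.integral_of_le hab,
    integral_rpow (Or.inr ⟨by linarith, notMem_uIcc_of_lt ha (ha.trans_le hab)⟩)]
  congr 1
  rw [show -α + 1 = 1 - α by ring, div_eq_div_iff (by linarith) (by linarith)]
  ring

def scaledInterval (c S : ℝ) (T : EReal) : Set ℝ :=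
  {x : ℝ | c * S < x ∧ (x : EReal) < (c : EReal) * T}

lemma measurableSet_scaledInterval (c S : ℝ) (T : EReal) : MeasurableSet (scaledInterval c S T) :=
  measurableSet_Ioi.inter (measurableSet_lt measurable_coe_real_ereal measurable_const)

lemma lintegral_scaledInterval_ofReal_rpow_neg {α c S : ℝ} {T : EReal} (hα : 1 < α) (hc : 0 < c)
    (hS : 0 < S) (hST : (S : EReal) < T) :
    ∫⁻ x in scaledInterval c S T, ENNReal.ofReal (x ^ (-α)) =
      ENNReal.ofReal (c ^ (1 - α) * (S ^ (1 - α) - epow T (1 - α)) / (α - 1)) := by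
  rcases eq_or_ne T ⊤ with rfl | hT
  · have hset : scaledInterval c S ⊤ = Ioi (c * S) := by
      ext x
      simp [scaledInterval, EReal.coe_mul_top_of_pos hc]
    rw [hset, lintegral_Ioi_ofReal_rpow_neg hα (mul_pos hc hS), Real.mul_rpow hc.le hS.le]
    simp [epow, mul_div_assoc]
  · lift T to ℝ using ⟨hT, (bot_le.trans_lt hST).ne'⟩
    have hST' : S < T := EReal.coe_lt_coe_iff.mp hST
    have hset : scaledInterval c S T = Ioo (c * S) (c * T) := by
      ext x
      simp [scaledInterval, ← EReal.coe_mul, mem_Ioo]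
    rw [hset, lintegral_Ioo_ofReal_rpow_neg hα (mul_pos hc hS)
        (mul_le_mul_of_nonneg_left hST'.le hc.le),
      Real.mul_rpow hc.le hS.le, Real.mul_rpow hc.le (hS.trans hST').le]
    simp only [epow, EReal.coe_ne_top, if_false, EReal.toReal_coe]
    ring_nf

lemma setLIntegral_ofReal_le_mul {s : Set ℝ} (hs : MeasurableSet s) {f g : ℝ → ℝ} {C : ℝ}
    (hC : 0 ≤ C) (hfg : ∀ x ∈ s, f x ≤ C * g x) :
    ∫⁻ x in s, ENNReal.ofReal (f x) ≤ ENNReal.ofReal C * ∫⁻ x in s, ENNReal.ofReal (g x) := by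
  rw [← lintegral_const_mul' _ _ ENNReal.ofReal_ne_top]
  refine setLIntegral_mono' hs fun x hx => ?_
  rw [← ENNReal.ofReal_mul hC]
  exact ENNReal.ofReal_le_ofReal (hfg x hx)

lemma mul_setLIntegral_ofReal_le {s : Set ℝ} (hs : MeasurableSet s) {f g : ℝ → ℝ} {C : ℝ}
    (hC : 0 ≤ C) (hfg : ∀ x ∈ s, C * g x ≤ f x) :
    ENNReal.ofReal C * ∫⁻ x in s, ENNReal.ofReal (g x) ≤ ∫⁻ x in s, ENNReal.ofReal (f x) := by
  rw [← lintegral_const_mul' _ _ ENNReal.ofReal_ne_top]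
  refine setLIntegral_mono' hs fun x hx => ?_
  rw [← ENNReal.ofReal_mul hC]
  exact ENNReal.ofReal_le_ofReal (hfg x hx)

section Scaling

variable {α θ S P : ℝ} {T : EReal}

lemma mul_rpow_neg_one_div_one_add (hP : 0 < P) (hα : 0 < 1 + α) :
    P * (P ^ (-(1 / (1 + α)))) ^ α = P ^ (1 / (1 + α)) := by
  rw [← Real.rpow_mul hP.le]
  nth_rewrite 1 [← Real.rpow_one P]
  rw [← Real.rpow_add hP]
  congr 1
  field_simp
  ring

lemma rpow_neg_one_div_one_add_rpow_one_sub (hP : 0 < P) (hα : 0 < 1 + α) :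
    (P ^ (-(1 / (1 + α)))) ^ (1 - α) * (P ^ (1 / (1 + α))) ^ 2 = P := by
  rw [← Real.rpow_mul hP.le, ← Real.rpow_natCast, ← Real.rpow_mul hP.le, ← Real.rpow_add hP]
  nth_rewrite 2 [← Real.rpow_one P]
  congr 1
  field_simp
  ring

lemma le_mul_rpow_of_mem_scaledInterval {R x : ℝ} (hα : 1 < α) (hS : 0 < S) (hP : 0 < P)
    (hPdef : P ^ (1 / (1 + α)) = θ * Real.sqrt (S ^ (1 - α) - epow T (1 - α)))
    (hbig : 2 * R ≤ θ * S ^ α * Real.sqrt (S ^ (1 - α) - epow T (1 - α)))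
    (hx : x ∈ scaledInterval (P ^ (-(1 / (1 + α)))) S T) :
    2 * R ≤ P * x ^ α := by
  have hc : 0 < P ^ (-(1 / (1 + α))) := Real.rpow_pos_of_pos hP _
  calc 2 * R ≤ θ * Real.sqrt (S ^ (1 - α) - epow T (1 - α)) * S ^ α := by linarith
    _ = P * (P ^ (-(1 / (1 + α))) * S) ^ α := by
      rw [← hPdef, ← mul_rpow_neg_one_div_one_add hP (by linarith), Real.mul_rpow hc.le hS.le]
      ring
    _ ≤ P * x ^ α := by gcongr; exact hx.1.le

lemma lintegral_scaledInterval_ofReal_rpow_neg_eq (hα : 1 < α) (hθ : 0 < θ) (hS : 0 < S)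
    (hST : (S : EReal) < T) (hP : 0 < P)
    (hPdef : P ^ (1 / (1 + α)) = θ * Real.sqrt (S ^ (1 - α) - epow T (1 - α))) :
    ∫⁻ x in scaledInterval (P ^ (-(1 / (1 + α)))) S T, ENNReal.ofReal (x ^ (-α)) =
      ENNReal.ofReal (P / (θ ^ 2 * (α - 1))) := by
  set D := S ^ (1 - α) - epow T (1 - α)
  have hD : 0 < D :=
    Real.sqrt_pos.mp (pos_of_mul_pos_right (hPdef ▸ Real.rpow_pos_of_pos hP _) hθ.le)
  have hcD : (P ^ (-(1 / (1 + α)))) ^ (1 - α) * (θ ^ 2 * D) = P := by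
    rw [← Real.sq_sqrt hD.le, ← mul_pow, ← hPdef]
    exact rpow_neg_one_div_one_add_rpow_one_sub hP (by linarith)
  rw [lintegral_scaledInterval_ofReal_rpow_neg hα (Real.rpow_pos_of_pos hP _) hS hST]
  change ENNReal.ofReal ((P ^ (-(1 / (1 + α)))) ^ (1 - α) * D / (α - 1)) = _
  congr 1
  rw [div_eq_div_iff (by linarith) (mul_pos (by positivity) (by linarith)).ne']
  linear_combination (α - 1) * hcD

end Scaling

theorem stmt10 (α θ S R P : ℝ) (T : EReal) (hα : 1 < α) (hθ : 0 < θ) (hS : 0 < S)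
    (hST : (S : EReal) < T) (hR : 1 ≤ R) (hP : 0 < P)
    (hPdef : P ^ (1 / (1 + α)) = θ * Real.sqrt (S ^ (1 - α) - epow T (1 - α)))
    (hbig : 2 * R ≤ θ * S ^ α * Real.sqrt (S ^ (1 - α) - epow T (1 - α)))
    (ζ : E3) (hζ : ‖ζ‖ ≤ R) :
    (∫⁻ x in {x : ℝ | P ^ (-(1 / (1 + α))) * S < x ∧
        (x : EReal) < ((P ^ (-(1 / (1 + α))) : ℝ) : EReal) * T},
      ENNReal.ofReal (1 / ‖ζ - P • axPt α x‖)) ≤ ENNReal.ofReal (2 / (θ ^ 2 * (α - 1))) ∧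
    ENNReal.ofReal (1 / (2 * θ ^ 2 * (α - 1))) ≤
      ∫⁻ x in {x : ℝ | P ^ (-(1 / (1 + α))) * S < x ∧
          (x : EReal) < ((P ^ (-(1 / (1 + α))) : ℝ) : EReal) * T},
        ENNReal.ofReal (1 / (1 + P * x ^ α)) := by
  set s := scaledInterval (P ^ (-(1 / (1 + α)))) S T
  have hs : MeasurableSet s := measurableSet_scaledInterval _ _ _
  have hI := lintegral_scaledInterval_ofReal_rpow_neg_eq hα hθ hS hST hP hPdef
  have hpos : ∀ x ∈ s, 0 < x := fun x hx => (mul_pos (Real.rpow_pos_of_pos hP _) hS).trans hx.1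
  have hlarge : ∀ x ∈ s, 2 * R ≤ P * x ^ α := fun x hx =>
    le_mul_rpow_of_mem_scaledInterval hα hS hP hPdef hbig hx
  constructor
  · calc ∫⁻ x in s, ENNReal.ofReal (1 / ‖ζ - P • axPt α x‖)
        ≤ ENNReal.ofReal (2 / P) * ∫⁻ x in s, ENNReal.ofReal (x ^ (-α)) :=
          setLIntegral_ofReal_le_mul hs (by positivity) fun x hx =>
            one_div_norm_sub_smul_axPt_le hP (hpos x hx) (by linarith [hlarge x hx])
      _ = ENNReal.ofReal (2 / (θ ^ 2 * (α - 1))) := by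
          rw [hI, ← ENNReal.ofReal_mul (by positivity)]
          congr 1
          field_simp
  · calc ENNReal.ofReal (1 / (2 * θ ^ 2 * (α - 1)))
        = ENNReal.ofReal (1 / (2 * P)) * ∫⁻ x in s, ENNReal.ofReal (x ^ (-α)) := by
          rw [hI, ← ENNReal.ofReal_mul (by positivity)]
          congr 1
          field_simp
      _ ≤ ∫⁻ x in s, ENNReal.ofReal (1 / (1 + P * x ^ α)) :=
          mul_setLIntegral_ofReal_le hs (by positivity) fun x hx =>
            one_div_two_mul_rpow_neg_le (hpos x hx) (by linarith [hlarge x hx])
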